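/- In the distinguished pre-Nichols algebra B̃(HV₁) (quotient of T(HV₁) by x_i²=0, the two FK₃ sum relations, u_{i1} − ω u_{1,2−i}, and x₄z_h − q₂ z_h x₄), for j ∈ {2,3} one has (ad_c x₄) u_{1j} = q₂ ω² z₁ z_j − q₂ z_{5−j} z₁, equivalently u_{1j} x₄ + q₁² ω² x₄ u_{1j} = q₂^{−1} z₁ z_j + q₁ z_{5−j} z₁. -/

import Mathlib

/-- `z_h = x_h x₄ − q₁ x₄ x_h` (here `y` plays the role of `x₄` and the first
three generators are indexed by `ZMod 3`, with `x₃ = x 0`, so that `x 3 = x₃`). -/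
def zz {k : Type*} [Field k] {A : Type*} [Ring A] [Algebra k A]
    (q1 : k) (x : ZMod 3 → A) (y : A) (h : ZMod 3) : A :=
  x h * y - q1 • (y * x h)

/-- `u_{ij} = (ad_c x_i) z_j = x_i z_j + q₁ z_{2i−j} x_i`. -/
def uu {k : Type*} [Field k] {A : Type*} [Ring A] [Algebra k A]
    (q1 : k) (x : ZMod 3 → A) (y : A) (i j : ZMod 3) : A :=
  x i * zz q1 x y j + q1 • (zz q1 x y (2 * i - j) * x i)

/-! Expand `x₄ (x₁ z_j + q₁ z_{5-j} x₁)` and move `x₄` past `z_j` and `z_{5-j}` using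
`x₄ z_h = q₂ z_h x₄`; since `q₁ q₂ ω² = -1`, the resulting terms regroup exactly into
`z₁ z_j` and `z_{5-j} z₁`. The second identity is the first one multiplied by `q₁² ω²`. -/

section SkewCommutation

variable {k : Type*} [Field k] {A : Type*} [Ring A] [Algebra k A]

theorem mul_add_smul_mul_eq_of_skew_commute {q1 q2 t : k} (ht : q1 * q2 * t = -1)
    {x y Z W : A} (hZ : y * Z = q2 • (Z * y)) (hW : y * W = q2 • (W * y)) :
    y * (x * Z + q1 • (W * x)) + (q2 ^ 2 * t) • ((x * Z + q1 • (W * x)) * y)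
      = (q2 * t) • ((x * y - q1 • (y * x)) * Z) - q2 • (W * (x * y - q1 • (y * x))) := by
  have hyWx : y * W * x = q2 • (W * y * x) := by rw [hW, smul_mul_assoc]
  have hxyZ : x * y * Z = q2 • (x * Z * y) := by
    rw [mul_assoc, hZ, mul_smul_comm, mul_assoc]
  simp only [mul_add, add_mul, sub_mul, mul_sub, smul_mul_assoc, mul_smul_comm, smul_add,
    smul_sub, smul_smul, ← mul_assoc, hyWx, hxyZ]
  match_scalars
  · linear_combination ht
  · ring
  · ring
  · linear_combination q2 * ht

theorem mul_add_smul_mul_eq_of_mul_add_smul_mul_eq {q1 q2 t : k} (ht : q1 * q2 * t = -1)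
    {y u M N : A} (h : y * u + (q2 ^ 2 * t) • (u * y) = (q2 * t) • M - q2 • N) :
    u * y + (q1 ^ 2 * t) • (y * u) = q2⁻¹ • M + q1 • N := by
  have hq2 : q2 ≠ 0 := by rintro rfl; simp at ht
  have h' := congrArg ((q1 ^ 2 * t) • ·) h
  simp only [smul_add, smul_sub, smul_smul] at h'
  have e1 : q1 ^ 2 * t * (q2 ^ 2 * t) = 1 := by linear_combination (q1 * q2 * t - 1) * ht
  have e2 : q1 ^ 2 * t * (q2 * t) = q2⁻¹ := by
    field_simp
    linear_combination e1
  have e3 : q1 ^ 2 * t * q2 = -q1 := by linear_combination q1 * ht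
  rwa [e1, e2, e3, one_smul, neg_smul, sub_neg_eq_add, add_comm] at h'

end SkewCommutation

theorem ad_x4_u1j_general {k : Type*} [Field k]
    (ω q1 q2 : k) (hω : ω ^ 3 = 1) (hq : q1 * q2 = -ω)
    {A : Type*} [Ring A] [Algebra k A] (x : ZMod 3 → A) (y : A)
    (hz : ∀ h : ZMod 3, y * zz q1 x y h = q2 • (zz q1 x y h * y)) :
    ∀ j : ZMod 3, j ≠ 1 →
      (y * uu q1 x y 1 j + (q2 ^ 2 * ω ^ 2) • (uu q1 x y 1 j * y)
          = (q2 * ω ^ 2) • (zz q1 x y 1 * zz q1 x y j)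
            - q2 • (zz q1 x y (5 - j) * zz q1 x y 1)) ∧
      (uu q1 x y 1 j * y + (q1 ^ 2 * ω ^ 2) • (y * uu q1 x y 1 j)
          = q2⁻¹ • (zz q1 x y 1 * zz q1 x y j)
            + q1 • (zz q1 x y (5 - j) * zz q1 x y 1)) := by
  intro j _
  have ht : q1 * q2 * ω ^ 2 = -1 := by linear_combination ω ^ 2 * hq - hω
  have first := mul_add_smul_mul_eq_of_skew_commute (x := x 1) ht (hz j) (hz (2 * 1 - j))
  rw [show (2 : ZMod 3) * 1 = 5 by decide] at first
  exact ⟨first, mul_add_smul_mul_eq_of_mul_add_smul_mul_eq ht first⟩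

/-- in the distinguished pre-Nichols algebra `B̃(HV₁)` (any quotient
of `T(HV₁)` by the relations `x_i² = 0`, the two FK₃ sum relations,
`u_{i1} − ω u_{1,2−i} = 0` and `x₄z_h − q₂z_h x₄ = 0`), for `j ∈ {2,3}` one has
`(ad_c x₄) u_{1j} = q₂ω² z₁z_j − q₂ z_{5−j} z₁`, equivalently
`u_{1j} x₄ + q₁²ω² x₄ u_{1j} = q₂⁻¹ z₁z_j + q₁ z_{5−j} z₁`. -/
theorem ad_x4_u1j {k : Type*} [Field k] [CharZero k]
    (ω q1 q2 : k) (hω : ω ^ 3 = 1) (hω1 : ω ≠ 1) (hq : q1 * q2 = -ω)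
    {A : Type*} [Ring A] [Algebra k A] (x : ZMod 3 → A) (y : A)
    (hx2 : ∀ i : ZMod 3, x i ^ 2 = 0)
    (hs1 : x 1 * x 2 + x 3 * x 1 + x 2 * x 3 = 0)
    (hs2 : x 2 * x 1 + x 1 * x 3 + x 3 * x 2 = 0)
    (hu2 : uu q1 x y 2 1 = ω • uu q1 x y 1 3)
    (hu3 : uu q1 x y 3 1 = ω • uu q1 x y 1 2)
    (hz : ∀ h : ZMod 3, y * zz q1 x y h = q2 • (zz q1 x y h * y)) :
    ∀ j : ZMod 3, j ≠ 1 →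
      (y * uu q1 x y 1 j + (q2 ^ 2 * ω ^ 2) • (uu q1 x y 1 j * y)
          = (q2 * ω ^ 2) • (zz q1 x y 1 * zz q1 x y j)
            - q2 • (zz q1 x y (5 - j) * zz q1 x y 1)) ∧
      (uu q1 x y 1 j * y + (q1 ^ 2 * ω ^ 2) • (y * uu q1 x y 1 j)
          = q2⁻¹ • (zz q1 x y 1 * zz q1 x y j)
            + q1 • (zz q1 x y (5 - j) * zz q1 x y 1)) :=
  ad_x4_u1j_general ω q1 q2 hω hq x y hz
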